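/- For any tree T on n ≥ 3 vertices, γ(T) ≤ n/(2n−3), with equality if and only if T is isomorphic to the star S_n. -/

import Mathlib

open Finset SimpleGraph

/-- `max_{uv ∈ E(G)} |x_u - x_v|` (as a real supremum over adjacent pairs). -/
noncomputable def edgeSup {V : Type*} (G : SimpleGraph V) (x : V → ℝ) : ℝ :=
  ⨆ p : {p : V × V // G.Adj p.1 p.2}, |x p.1.1 - x p.1.2|

/-- The `l_∞`-smoothing parameter `γ(G)`. -/
noncomputable def gamma {V : Type*} [Fintype V] (G : SimpleGraph V) : ℝ :=
  sInf {y | ∃ x : V → ℝ, (∑ v, x v) = 0 ∧ (⨆ v, |x v|) = 1 ∧ y = edgeSup G x}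

/-- Transmission of a vertex: sum of graph distances to all vertices. -/
noncomputable def transmission {V : Type*} [Fintype V] (G : SimpleGraph V) (u : V) : ℕ :=
  ∑ v, G.dist u v

/-- The star graph on `n` vertices: vertex `0` is adjacent to all others. -/
def starGraph (n : ℕ) : SimpleGraph (Fin n) :=
  SimpleGraph.fromRel (fun u _ => u.val = 0)

/-!
For a connected graph, `γ(G) = n / max_u tr(u)`. If `∑ x = 0` and `|x a| = 1`, then
`n = |∑_v (x a - x v)| ≤ tr(a) · edgeSup x`, since `x` changes by at most `edgeSup x` along each
edge of a shortest path; conversely the rescaled distance profile of a vertex of maximum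
transmission attains this bound.

Every vertex `v ≠ u` contributes `d(u,v) + [uv ∈ E] ≥ 2` to `tr(u) + deg(u)`, with equality iff
`d(u,v) ≤ 2`. Hence a leaf of a tree has transmission at least `2n - 3`, and equality forces its
neighbour to be adjacent to every vertex; a tree with such a universal vertex is the star, in which
every transmission is at most `2n - 3`.
-/

section EdgeSup

variable {V : Type*} {G : SimpleGraph V}

lemma edgeSup_nonneg (x : V → ℝ) : 0 ≤ edgeSup G x :=
  Real.iSup_nonneg fun _ => abs_nonneg _

lemma edgeSup_le {x : V → ℝ} {c : ℝ} (hc : 0 ≤ c) (h : ∀ a b, G.Adj a b → |x a - x b| ≤ c) :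
    edgeSup G x ≤ c :=
  Real.iSup_le (fun p => h _ _ p.2) hc

variable [Finite V]

lemma abs_sub_le_edgeSup (x : V → ℝ) {a b : V} (h : G.Adj a b) : |x a - x b| ≤ edgeSup G x :=
  le_ciSup (f := fun p : {p : V × V // G.Adj p.1 p.2} => |x p.1.1 - x p.1.2|)
    (Set.finite_range _).bddAbove ⟨(a, b), h⟩

lemma SimpleGraph.Walk.abs_sub_le_length_mul_edgeSup (x : V → ℝ) {a b : V} (p : G.Walk a b) :
    |x a - x b| ≤ p.length * edgeSup G x := by
  induction p with
  | nil => simp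
  | @cons a c b h q ih =>
    calc |x a - x b| ≤ |x a - x c| + |x c - x b| := abs_sub_le _ _ _
      _ ≤ edgeSup G x + q.length * edgeSup G x := add_le_add (abs_sub_le_edgeSup x h) ih
      _ = (q.cons h).length * edgeSup G x := by push_cast [Walk.length_cons]; ring

lemma SimpleGraph.Reachable.abs_sub_le_dist_mul_edgeSup (x : V → ℝ) {a b : V}
    (h : G.Reachable a b) : |x a - x b| ≤ G.dist a b * edgeSup G x := by
  obtain ⟨p, hp⟩ := h.exists_walk_length_eq_dist
  simpa [hp] using p.abs_sub_le_length_mul_edgeSup x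

end EdgeSup

section Transmission

variable {V : Type*} [Fintype V] {G : SimpleGraph V}

lemma dist_le_transmission (u v : V) : G.dist u v ≤ transmission G u :=
  Finset.single_le_sum (fun _ _ => Nat.zero_le _) (Finset.mem_univ v)

lemma SimpleGraph.Connected.card_mul_dist_le_transmission_add (hc : G.Connected) (u v : V) :
    Fintype.card V * G.dist u v ≤ transmission G u + transmission G v := by
  calc Fintype.card V * G.dist u v = ∑ _w : V, G.dist u v := by simp
    _ ≤ ∑ w, (G.dist u w + G.dist w v) := Finset.sum_le_sum fun w _ => hc.dist_triangle
    _ = transmission G u + transmission G v := by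
        simp only [transmission, Finset.sum_add_distrib, dist_comm]

lemma SimpleGraph.Connected.card_le_transmission_mul_edgeSup (hc : G.Connected) {x : V → ℝ}
    (hx : ∑ v, x v = 0) {a : V} (ha : |x a| = 1) :
    (Fintype.card V : ℝ) ≤ transmission G a * edgeSup G x := by
  calc (Fintype.card V : ℝ) = |∑ v, (x a - x v)| := by
        simp [Finset.sum_sub_distrib, hx, ha]
    _ ≤ ∑ v, |x a - x v| := Finset.abs_sum_le_sum_abs _ _
    _ ≤ ∑ v, (G.dist a v : ℝ) * edgeSup G x :=
        Finset.sum_le_sum fun v _ => (hc a v).abs_sub_le_dist_mul_edgeSup x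
    _ = transmission G a * edgeSup G x := by simp [transmission, Finset.sum_mul]

lemma card_div_transmission_le_edgeSup (hc : G.Connected) {u : V}
    (hu : ∀ v, transmission G v ≤ transmission G u) (ht : 0 < transmission G u) {x : V → ℝ}
    (hx : ∑ v, x v = 0) (hsup : (⨆ v, |x v|) = 1) :
    (Fintype.card V : ℝ) / transmission G u ≤ edgeSup G x := by
  have : Nonempty V := ⟨u⟩
  obtain ⟨a, ha⟩ := exists_eq_ciSup_of_finite (f := fun v => |x v|)
  rw [div_le_iff₀ (by exact_mod_cast ht), mul_comm]
  calc (Fintype.card V : ℝ) ≤ transmission G a * edgeSup G x :=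
        hc.card_le_transmission_mul_edgeSup hx (ha.trans hsup)
    _ ≤ transmission G u * edgeSup G x := by gcongr; exacts [edgeSup_nonneg x, hu a]

/-- The extremal vector is the distance profile of `u`, rescaled to mean zero; maximality of
`tr(u)` is what keeps it in the unit ball, via `n d(u,v) ≤ tr(u) + tr(v)`. -/
lemma exists_edgeSup_le_card_div_transmission (hc : G.Connected) {u : V}
    (hu : ∀ v, transmission G v ≤ transmission G u) (ht : 0 < transmission G u) :
    ∃ x : V → ℝ, ∑ v, x v = 0 ∧ (⨆ v, |x v|) = 1 ∧
      edgeSup G x ≤ (Fintype.card V : ℝ) / transmission G u := by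
  have : Nonempty V := ⟨u⟩
  have ht' : (0 : ℝ) < transmission G u := by exact_mod_cast ht
  let x : V → ℝ := fun v => Fintype.card V * G.dist u v / transmission G u - 1
  have hbound : ∀ v, |x v| ≤ 1 := fun v => by
    have h : (Fintype.card V * G.dist u v : ℝ) ≤ 2 * transmission G u := by
      exact_mod_cast (hc.card_mul_dist_le_transmission_add u v).trans (by linarith [hu v])
    rw [abs_le]
    constructor
    · have : (0 : ℝ) ≤ Fintype.card V * G.dist u v / transmission G u := by positivity
      linarith
    · rw [sub_le_iff_le_add, div_le_iff₀ ht']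
      linarith
  refine ⟨x, ?_, ?_, ?_⟩
  · have hsum : ∑ v, (G.dist u v : ℝ) = transmission G u := by simp [transmission]
    simp only [x, Finset.sum_sub_distrib, ← Finset.sum_div, ← Finset.mul_sum, hsum]
    simp [ht'.ne']
  · refine le_antisymm (ciSup_le hbound) (le_ciSup_of_le (Set.finite_range _).bddAbove u ?_)
    simp [x]
  · refine edgeSup_le (by positivity) fun a b hab => ?_
    have h₁ : G.dist u a ≤ G.dist u b + 1 := by have := hab.diff_dist_adj (u := u); omega
    have h₂ : G.dist u b ≤ G.dist u a + 1 := by have := hab.diff_dist_adj (u := u); omega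
    have hd : |(G.dist u a : ℝ) - G.dist u b| ≤ 1 := by
      rw [abs_sub_le_iff, sub_le_iff_le_add, sub_le_iff_le_add, add_comm 1, add_comm 1]
      exact ⟨by exact_mod_cast h₁, by exact_mod_cast h₂⟩
    calc |x a - x b|
        = Fintype.card V / transmission G u * |(G.dist u a : ℝ) - G.dist u b| := by
          rw [← abs_of_nonneg (by positivity : (0 : ℝ) ≤ Fintype.card V / transmission G u),
            ← abs_mul]
          congr 1
          simp only [x]
          ring
      _ ≤ Fintype.card V / transmission G u := mul_le_of_le_one_right (by positivity) hd

lemma SimpleGraph.Connected.gamma_eq_card_div_transmission [Nontrivial V] (hc : G.Connected)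
    {u : V} (hu : ∀ v, transmission G v ≤ transmission G u) :
    gamma G = (Fintype.card V : ℝ) / transmission G u := by
  obtain ⟨v, hv⟩ := exists_ne u
  have ht : 0 < transmission G u := (hc.pos_dist_of_ne hv.symm).trans_le (dist_le_transmission u v)
  refine IsLeast.csInf_eq ⟨?_, ?_⟩
  · obtain ⟨x, hx, hsup, hle⟩ := exists_edgeSup_le_card_div_transmission hc hu ht
    exact ⟨x, hx, hsup, le_antisymm (card_div_transmission_le_edgeSup hc hu ht hx hsup) hle⟩
  · rintro _ ⟨x, hx, hsup, rfl⟩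
    exact card_div_transmission_le_edgeSup hc hu ht hx hsup

end Transmission

section TransmissionDegree

variable {V : Type*} {G : SimpleGraph V} [DecidableRel G.Adj]

lemma SimpleGraph.Connected.two_le_dist_add_ite (hc : G.Connected) {u v : V} (h : u ≠ v) :
    2 ≤ G.dist u v + if G.Adj u v then 1 else 0 := by
  split_ifs with hadj
  · simp [dist_eq_one_iff_adj.mpr hadj]
  · exact hc.one_lt_dist_of_ne_of_not_adj h hadj

variable [Fintype V]

lemma transmission_add_degree_eq_sum [DecidableEq V] (u : V) :
    transmission G u + G.degree u =
      ∑ v ∈ Finset.univ.erase u, (G.dist u v + if G.Adj u v then 1 else 0) := by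
  rw [Finset.sum_add_distrib, Finset.sum_erase _ (by simp), Finset.sum_erase _ (by simp),
    ← Finset.card_filter, ← neighborFinset_eq_filter, card_neighborFinset_eq_degree, transmission]

lemma sum_univ_erase_two [DecidableEq V] (u : V) :
    ∑ _v ∈ Finset.univ.erase u, 2 = 2 * (Fintype.card V - 1) := by
  simp [mul_comm]

lemma SimpleGraph.Connected.two_mul_card_sub_one_le_transmission_add_degree (hc : G.Connected)
    (u : V) : 2 * (Fintype.card V - 1) ≤ transmission G u + G.degree u := by
  classical
  rw [transmission_add_degree_eq_sum, ← sum_univ_erase_two]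
  exact Finset.sum_le_sum fun v hv => hc.two_le_dist_add_ite (Finset.ne_of_mem_erase hv).symm

lemma SimpleGraph.Connected.two_mul_card_sub_one_lt_transmission_add_degree (hc : G.Connected)
    {u z : V} (hz : 3 ≤ G.dist u z) : 2 * (Fintype.card V - 1) < transmission G u + G.degree u := by
  classical
  have hzu : z ≠ u := by rintro rfl; simp at hz
  rw [transmission_add_degree_eq_sum, ← sum_univ_erase_two]
  refine Finset.sum_lt_sum (fun v hv => ?_) ⟨z, Finset.mem_erase.mpr ⟨hzu, Finset.mem_univ z⟩, ?_⟩
  · exact hc.two_le_dist_add_ite (Finset.ne_of_mem_erase hv).symm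
  · omega

lemma transmission_add_degree_le_two_mul_card_sub_one {u : V} (hu : ∀ v, G.dist u v ≤ 2) :
    transmission G u + G.degree u ≤ 2 * (Fintype.card V - 1) := by
  classical
  rw [transmission_add_degree_eq_sum, ← sum_univ_erase_two]
  refine Finset.sum_le_sum fun v _ => ?_
  split_ifs with h
  · simp [dist_eq_one_iff_adj.mpr h]
  · simpa using hu v

end TransmissionDegree

section Star

variable {V : Type*} {G : SimpleGraph V}

lemma SimpleGraph.IsAcyclic.eq_starGraph_of_isUniversal (hG : G.IsAcyclic) {r : V}
    (hr : G.IsUniversal r) : G = SimpleGraph.starGraph r := by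
  ext a b
  rw [starGraph_adj]
  refine ⟨fun h => ⟨h.ne, ?_⟩, ?_⟩
  · classical
    by_contra! hab
    exact hG.cliqueFree le_rfl {r, a, b}
      (is3Clique_triple_iff.mpr ⟨hr (Ne.symm hab.1), hr (Ne.symm hab.2), h⟩)
  · rintro ⟨hne, rfl | rfl⟩
    exacts [hr hne, (hr hne.symm).symm]

lemma SimpleGraph.Iso.isUniversal_symm_apply {W : Type*} {H : SimpleGraph W} (f : G ≃g H)
    {r : W} (hr : H.IsUniversal r) : G.IsUniversal (f.symm r) := fun v hv => by
  rw [← f.map_adj_iff, f.apply_symm_apply]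
  exact hr fun h => hv (f.symm_apply_eq.mpr h)

lemma SimpleGraph.nonempty_iso_starGraph_of_card_eq {W : Type*} [Fintype V] [Fintype W]
    (h : Fintype.card V = Fintype.card W) (r : V) (s : W) :
    Nonempty (SimpleGraph.starGraph r ≃g SimpleGraph.starGraph s) := by
  classical
  let e : V ≃ W := (Fintype.equivOfCardEq h).trans (Equiv.swap (Fintype.equivOfCardEq h r) s)
  have he : ∀ v, e v = s ↔ v = r := fun v => by
    rw [show s = e r by simp [e], e.apply_eq_iff_eq]
  exact ⟨⟨e, by simp [starGraph_adj, he]⟩⟩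

lemma starGraph_eq_starGraph_zero (n : ℕ) [NeZero n] :
    _root_.starGraph n = SimpleGraph.starGraph 0 := by
  ext a b
  simp only [_root_.starGraph, SimpleGraph.starGraph, fromRel_adj, Fin.ext_iff, Fin.val_zero]

lemma SimpleGraph.IsTree.nonempty_iso_starGraph_iff [Fintype V] [Nonempty V] (hG : G.IsTree) :
    Nonempty (G ≃g _root_.starGraph (Fintype.card V)) ↔ ∃ r, G.IsUniversal r := by
  rw [starGraph_eq_starGraph_zero]
  refine ⟨fun ⟨f⟩ => ⟨_, f.isUniversal_symm_apply isUniversal_starGraph_self⟩, ?_⟩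
  rintro ⟨r, hr⟩
  rw [hG.isAcyclic.eq_starGraph_of_isUniversal hr]
  exact nonempty_iso_starGraph_of_card_eq (Fintype.card_fin _).symm r 0

lemma SimpleGraph.IsUniversal.dist_le_two {r : V} (hr : G.IsUniversal r) (u v : V) :
    G.dist u v ≤ 2 := by
  have hr' : ∀ v, G.dist r v ≤ 1 := fun v => by
    obtain rfl | h := eq_or_ne r v
    · simp
    · exact (dist_eq_one_iff_adj.mpr (hr h)).le
  calc G.dist u v ≤ G.dist u r + G.dist r v := (Connected.of_isUniversal hr).dist_triangle
    _ ≤ 2 := by linarith [hr' u, hr' v, G.dist_comm (u := u) (v := r)]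

lemma SimpleGraph.IsUniversal.transmission_le [Fintype V] [Nontrivial V] [DecidableRel G.Adj]
    {r : V} (hr : G.IsUniversal r) (u : V) : transmission G u ≤ 2 * Fintype.card V - 3 := by
  have := transmission_add_degree_le_two_mul_card_sub_one (hr.dist_le_two u)
  have := (Connected.of_isUniversal hr).preconnected.degree_pos_of_nontrivial u
  omega

lemma SimpleGraph.Connected.exists_isUniversal_of_transmission_le [Fintype V] [DecidableRel G.Adj]
    (hc : G.Connected) {ℓ : V} (hℓ : G.degree ℓ = 1)
    (h : transmission G ℓ ≤ 2 * Fintype.card V - 3) : ∃ r, G.IsUniversal r := by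
  obtain ⟨w, hw, huniq⟩ := degree_eq_one_iff_existsUnique_adj.mp hℓ
  have : 1 < Fintype.card V := Fintype.one_lt_card_iff.mpr ⟨ℓ, w, hw.ne⟩
  have hd : ∀ v, G.dist ℓ v ≤ 2 := fun v => by
    by_contra! hv
    have := hc.two_mul_card_sub_one_lt_transmission_add_degree hv
    omega
  refine ⟨w, fun v hwv => ?_⟩
  by_contra hnadj
  obtain ⟨p, hp⟩ := hc.exists_walk_length_eq_dist ℓ v
  cases p with
  | nil => exact hnadj hw.symm
  | cons h q =>
    obtain rfl := huniq _ h
    have := hc.one_lt_dist_of_ne_of_not_adj hwv hnadj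
    have := dist_le q
    have := hd v
    simp only [Walk.length_cons] at hp
    linarith

end Star

theorem stmt17 {V : Type*} [Fintype V] (T : SimpleGraph V) (hT : T.IsTree)
    (hn : 3 ≤ Fintype.card V) :
    gamma T ≤ (Fintype.card V : ℝ) / (2 * (Fintype.card V : ℝ) - 3) ∧
      (gamma T = (Fintype.card V : ℝ) / (2 * (Fintype.card V : ℝ) - 3) ↔
        Nonempty (T ≃g _root_.starGraph (Fintype.card V))) := by
  classical
  have : Nontrivial V := Fintype.one_lt_card_iff_nontrivial.mp (by omega)
  obtain ⟨u, hu⟩ := Finite.exists_max (transmission T)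
  obtain ⟨ℓ, hℓ⟩ := hT.exists_vert_degree_one_of_nontrivial
  have hleaf : 2 * Fintype.card V - 3 ≤ transmission T u := by
    have := hT.connected.two_mul_card_sub_one_le_transmission_add_degree ℓ
    have := hu ℓ
    omega
  have hstar : transmission T u = 2 * Fintype.card V - 3 ↔
      Nonempty (T ≃g _root_.starGraph (Fintype.card V)) := by
    rw [hT.nonempty_iso_starGraph_iff]
    refine ⟨fun h => hT.connected.exists_isUniversal_of_transmission_le hℓ (h ▸ hu ℓ), ?_⟩
    rintro ⟨r, hr⟩
    exact le_antisymm (hr.transmission_le u) hleaf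
  have hcast : ((2 * Fintype.card V - 3 : ℕ) : ℝ) = 2 * (Fintype.card V : ℝ) - 3 := by
    push_cast [Nat.cast_sub (by omega : 3 ≤ 2 * Fintype.card V)]
    ring
  have hpos : (0 : ℝ) < (2 * Fintype.card V - 3 : ℕ) := by
    exact_mod_cast (by omega : 0 < 2 * Fintype.card V - 3)
  rw [hT.connected.gamma_eq_card_div_transmission hu, ← hcast, ← hstar]
  refine ⟨div_le_div_of_nonneg_left (by positivity) hpos (by exact_mod_cast hleaf), ?_⟩
  rw [div_eq_mul_inv, div_eq_mul_inv, mul_right_inj' (by positivity), inv_inj, Nat.cast_inj]
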